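/- Let k ≥ 1, m > 0, σ > 0 with σ/m ≤ 1/2, and let y_1 ≠ y_2 ∈ ℝ^k. If ‖y_1 − y_2‖_2 < (4/Ω) · arcsin((σ/m)^{1/2}), then there exist â > 0 and ŷ ∈ ℝ^k such that |â e^{i ŷ·ω} − m e^{i y_1·ω} − m e^{i y_2·ω}| < 2σ for all ω ∈ ℝ^k with ‖ω‖_2 ≤ Ω. Consequently, the one-source measure μ̂ = â δ_{ŷ} is a σ-admissible measure of the image Y(ω) = F[μ](ω) + W(ω) of μ = m δ_{y_1} + m δ_{y_2} with the noise W(ω) = (F[μ̂](ω) − F[μ](ω))/2, which satisfies |W(ω)| < σ for all ‖ω‖_2 ≤ Ω. -/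

import Mathlib

/-!
Place one source of amplitude `m (1 + cos T)` at the midpoint `ŷ` of `y₁, y₂`, where
`T = Ω ‖y₁ - y₂‖ / 2`. Writing `⟪y_{1,2}, ω⟫ = ⟪ŷ, ω⟫ ± t`, the difference of the Fourier
transforms is `e^{i⟪ŷ, ω⟫} (m (1 + cos T) - 2 m cos t)`, and `|t| ≤ T` on the ball `‖ω‖ ≤ Ω`
bounds its modulus by `m (1 - cos T)`. The separation hypothesis says `T < 2 arcsin √(σ/m)`,
and `m (1 - cos (2 arcsin √(σ/m))) = 2σ`.
-/

open Complex

theorem norm_ofReal_mul_exp_sub_two_exp (a m u t : ℝ) :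
    ‖(a : ℂ) * exp (I * (u : ℂ)) - (m : ℂ) * exp (I * ((u + t : ℝ) : ℂ))
        - (m : ℂ) * exp (I * ((u - t : ℝ) : ℂ))‖ = |a - 2 * m * Real.cos t| := by
  have hfactor : (a : ℂ) * exp (I * (u : ℂ)) - (m : ℂ) * exp (I * ((u + t : ℝ) : ℂ))
      - (m : ℂ) * exp (I * ((u - t : ℝ) : ℂ))
      = exp (u * I) * ((a - 2 * m * Real.cos t : ℝ) : ℂ) := by
    have hplus : I * ((u + t : ℝ) : ℂ) = u * I + t * I := by push_cast; ring
    have hminus : I * ((u - t : ℝ) : ℂ) = u * I + (-t : ℝ) * I := by push_cast; ring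
    rw [mul_comm I (u : ℂ), hplus, hminus, exp_add, exp_add, exp_mul_I (u : ℂ), exp_mul_I (t : ℂ),
      exp_mul_I ((-t : ℝ) : ℂ)]
    push_cast
    rw [cos_neg, sin_neg]
    ring
  rw [hfactor, norm_mul, norm_exp_ofReal_mul_I, one_mul, norm_real, Real.norm_eq_abs]

theorem Real.cos_two_mul_arcsin_sqrt {s : ℝ} (hs₀ : 0 ≤ s) (hs₁ : s ≤ 1) :
    Real.cos (2 * Real.arcsin (Real.sqrt s)) = 1 - 2 * s := by
  rw [Real.cos_two_mul_eq_one_sub,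
    Real.sin_arcsin (by linarith [Real.sqrt_nonneg s]) (Real.sqrt_le_one.mpr hs₁),
    Real.sq_sqrt hs₀]

section InnerProductSpace

variable {E : Type*} [NormedAddCommGroup E] [InnerProductSpace ℝ E]

theorem inner_eq_inner_midpoint_add (y₁ y₂ ω : E) :
    inner ℝ y₁ ω = inner ℝ (midpoint ℝ y₁ y₂) ω + inner ℝ (y₁ - y₂) ω / 2 := by
  rw [midpoint_eq_smul_add, real_inner_smul_left, inner_add_left, inner_sub_left]
  norm_num
  ring

theorem inner_eq_inner_midpoint_sub (y₁ y₂ ω : E) :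
    inner ℝ y₂ ω = inner ℝ (midpoint ℝ y₁ y₂) ω - inner ℝ (y₁ - y₂) ω / 2 := by
  rw [midpoint_eq_smul_add, real_inner_smul_left, inner_add_left, inner_sub_left]
  norm_num
  ring

theorem norm_midpoint_source_sub_two_sources_le {m Ω : ℝ} (hm : 0 ≤ m) {y₁ y₂ ω : E}
    (hω : ‖ω‖ ≤ Ω) (hT : Ω * ‖y₁ - y₂‖ / 2 ≤ Real.pi) :
    ‖((m * (1 + Real.cos (Ω * ‖y₁ - y₂‖ / 2)) : ℝ) : ℂ)
          * exp (I * ((inner ℝ (midpoint ℝ y₁ y₂) ω : ℝ) : ℂ))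
        - (m : ℂ) * exp (I * ((inner ℝ y₁ ω : ℝ) : ℂ))
        - (m : ℂ) * exp (I * ((inner ℝ y₂ ω : ℝ) : ℂ))‖
      ≤ m * (1 - Real.cos (Ω * ‖y₁ - y₂‖ / 2)) := by
  set T := Ω * ‖y₁ - y₂‖ / 2 with hTdef
  set t := inner ℝ (y₁ - y₂) ω / 2 with htdef
  rw [inner_eq_inner_midpoint_add y₁ y₂ ω, inner_eq_inner_midpoint_sub y₁ y₂ ω,
    norm_ofReal_mul_exp_sub_two_exp]
  have ht : |t| ≤ T := by
    have hCS := abs_real_inner_le_norm (y₁ - y₂) ω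
    have : ‖y₁ - y₂‖ * ‖ω‖ ≤ ‖y₁ - y₂‖ * Ω := mul_le_mul_of_nonneg_left hω (norm_nonneg _)
    rw [htdef, hTdef, abs_div, abs_two]
    linarith
  have hcos : Real.cos T ≤ Real.cos t := by
    rw [← Real.cos_abs t]
    exact Real.cos_le_cos_of_nonneg_of_le_pi (abs_nonneg t) hT ht
  rw [abs_le]
  constructor <;>
    linarith [mul_le_mul_of_nonneg_left hcos hm, mul_le_mul_of_nonneg_left (Real.cos_le_one t) hm]

end InnerProductSpace

theorem one_source_admissible_below_diffraction_limit
    (k : ℕ) (Ω σ m : ℝ) (hΩ : 0 < Ω) (hσ : 0 < σ) (hm : 0 < m)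
    (hratio : σ / m ≤ 1 / 2)
    (y₁ y₂ : EuclideanSpace ℝ (Fin k))
    (hsep : ‖y₁ - y₂‖ < 4 / Ω * Real.arcsin (Real.sqrt (σ / m))) :
    ∃ (ah : ℝ) (_ : 0 < ah) (yh : EuclideanSpace ℝ (Fin k)),
      (∀ ω : EuclideanSpace ℝ (Fin k), ‖ω‖ ≤ Ω →
        Norm.norm
          ((ah : ℂ) * Complex.exp (Complex.I * ((inner ℝ yh ω : ℝ) : ℂ))
            - (m : ℂ) * Complex.exp (Complex.I * ((inner ℝ y₁ ω : ℝ) : ℂ))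
            - (m : ℂ) * Complex.exp (Complex.I * ((inner ℝ y₂ ω : ℝ) : ℂ))) < 2 * σ) ∧
      (∀ ω : EuclideanSpace ℝ (Fin k), ‖ω‖ ≤ Ω →
        Norm.norm
          (((ah : ℂ) * Complex.exp (Complex.I * ((inner ℝ yh ω : ℝ) : ℂ))
            - ((m : ℂ) * Complex.exp (Complex.I * ((inner ℝ y₁ ω : ℝ) : ℂ))
              + (m : ℂ) * Complex.exp (Complex.I * ((inner ℝ y₂ ω : ℝ) : ℂ)))) / 2) < σ) ∧
      (∀ ω : EuclideanSpace ℝ (Fin k), ‖ω‖ ≤ Ω →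
        Norm.norm
          ((ah : ℂ) * Complex.exp (Complex.I * ((inner ℝ yh ω : ℝ) : ℂ))
            - (((m : ℂ) * Complex.exp (Complex.I * ((inner ℝ y₁ ω : ℝ) : ℂ))
                + (m : ℂ) * Complex.exp (Complex.I * ((inner ℝ y₂ ω : ℝ) : ℂ)))
              + ((ah : ℂ) * Complex.exp (Complex.I * ((inner ℝ yh ω : ℝ) : ℂ))
                - ((m : ℂ) * Complex.exp (Complex.I * ((inner ℝ y₁ ω : ℝ) : ℂ))
                  + (m : ℂ) * Complex.exp (Complex.I * ((inner ℝ y₂ ω : ℝ) : ℂ)))) / 2)) < σ) := by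
  set T := Ω * ‖y₁ - y₂‖ / 2 with hTdef
  set A := Real.arcsin (Real.sqrt (σ / m))
  have hT₀ : 0 ≤ T := by positivity
  have hTA : T < 2 * A := by
    rw [div_mul_eq_mul_div, lt_div_iff₀ hΩ] at hsep
    linarith
  have hA : 2 * A ≤ Real.pi := by linarith [Real.arcsin_le_pi_div_two (Real.sqrt (σ / m))]
  have hcosA : Real.cos (2 * A) = 1 - 2 * (σ / m) :=
    Real.cos_two_mul_arcsin_sqrt (by positivity) (by linarith)
  have hcosT : 1 - 2 * (σ / m) < Real.cos T :=
    hcosA ▸ Real.cos_lt_cos_of_nonneg_of_le_pi hT₀ hA hTA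
  have hmcosT : m - 2 * σ < m * Real.cos T := by
    have := mul_lt_mul_of_pos_left hcosT hm
    rwa [mul_sub, mul_one, mul_left_comm, mul_div_cancel₀ σ hm.ne'] at this
  have hbound : ∀ ω : EuclideanSpace ℝ (Fin k), ‖ω‖ ≤ Ω →
      ‖((m * (1 + Real.cos T) : ℝ) : ℂ) * exp (I * ((inner ℝ (midpoint ℝ y₁ y₂) ω : ℝ) : ℂ))
        - (m : ℂ) * exp (I * ((inner ℝ y₁ ω : ℝ) : ℂ))
        - (m : ℂ) * exp (I * ((inner ℝ y₂ ω : ℝ) : ℂ))‖ < 2 * σ := fun ω hω =>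
    (norm_midpoint_source_sub_two_sources_le hm.le hω (by linarith)).trans_lt (by linarith)
  have hσm : σ ≤ 1 / 2 * m := (div_le_iff₀ hm).1 hratio
  have hhalf (X S : ℂ) : X - (S + (X - S) / 2) = (X - S) / 2 := by ring
  refine ⟨m * (1 + Real.cos T), by linarith, midpoint ℝ y₁ y₂, hbound, fun ω hω => ?_,
    fun ω hω => ?_⟩
  · rw [← sub_sub, norm_div, Complex.norm_two]
    linarith [hbound ω hω]
  · rw [hhalf, ← sub_sub, norm_div, Complex.norm_two]
    linarith [hbound ω hω]
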